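/- arXiv:2512.10438 — 3 statements merged into one kernel-verified Lean document; each statement's English description precedes it below -/
import Mathlib

section
/- Let G₁ and G₂ be ordered graphs, and let L₁ and L₂ be the lengths (numbers of vertices) of the longest monotone paths in G₁ and G₂ respectively. Then the length of the longest monotone path in the lexicographic product G₁ ⊗ G₂ is exactly L₁·L₂. -/
/-!
For an ordered graph `G` let `d x` be the number of edges of a longest monotone path ending at
`x`. Then `d x` is less than the number `L` of vertices of a longest monotone path, and `d`
strictly increases along every monotone edge. On `G₁ ⊗ G₂` the potential
`(b, a) ↦ L₁ * d₂ b + d₁ a` takes values below `L₁ * L₂` and strictly increases along monotone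
edges: an edge inside a fibre raises `d₁ a`, and an edge between fibres raises `d₂ b`, which
outweighs any drop of `d₁ a < L₁`. Hence monotone paths in the product have at most `L₁ * L₂`
vertices. Conversely, running a longest path of `G₁` in each fibre over a longest path of `G₂`
gives a monotone path with `L₁ * L₂` vertices.
-/

/-- The lexicographic product of ordered graphs `G₁` and `G₂`: vertex set `β × α`,
with `(b,a)` adjacent to `(b',a')` iff `b = b'` and `a a' ∈ E(G₁)`, or `b ≠ b'` and
`b b' ∈ E(G₂)`. -/
def lexProd {α β : Type*} (G₁ : SimpleGraph α) (G₂ : SimpleGraph β) :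
    SimpleGraph (β × α) where
  Adj p p' := (p.1 = p'.1 ∧ G₁.Adj p.2 p'.2) ∨ (p.1 ≠ p'.1 ∧ G₂.Adj p.1 p'.1)
  symm := by
    refine ⟨?_⟩
    rintro p p' (⟨h, ha⟩ | ⟨h, ha⟩)
    · exact Or.inl ⟨h.symm, ha.symm⟩
    · exact Or.inr ⟨fun hh => h hh.symm, ha.symm⟩
  loopless := by
    refine ⟨?_⟩
    rintro p (⟨_, ha⟩ | ⟨h, _⟩)
    · exact G₁.irrefl ha
    · exact h rfl

/-- The lexicographic order on `β × α` (first coordinate dominant). -/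
def lexLT {α β : Type*} [LT α] [LT β] (p p' : β × α) : Prop :=
  p.1 < p'.1 ∨ (p.1 = p'.1 ∧ p.2 < p'.2)

/-- `G` has a monotone path with `ℓ` vertices with respect to the order `lt`. -/
def HasMonoPathG {V : Type*} (lt : V → V → Prop) (G : SimpleGraph V) (ℓ : ℕ) : Prop :=
  ∃ v : Fin ℓ → V, (∀ i j : Fin ℓ, i < j → lt (v i) (v j)) ∧
    ∀ i j : Fin ℓ, (i : ℕ) + 1 = (j : ℕ) → G.Adj (v i) (v j)

/-- The number of vertices of a longest monotone path in `G` w.r.t. the order `lt`. -/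
noncomputable def longestMono {V : Type*} (lt : V → V → Prop) (G : SimpleGraph V) : ℕ :=
  sSup {ℓ : ℕ | HasMonoPathG lt G ℓ}

section MonotonePaths

variable {V : Type*} {lt : V → V → Prop} {G : SimpleGraph V}

def IsMonoPath (lt : V → V → Prop) (G : SimpleGraph V) {ℓ : ℕ} (v : Fin ℓ → V) : Prop :=
  (∀ i j : Fin ℓ, i < j → lt (v i) (v j)) ∧ ∀ i j : Fin ℓ, (i : ℕ) + 1 = j → G.Adj (v i) (v j)

theorem hasMonoPathG_zero : HasMonoPathG lt G 0 :=
  ⟨Fin.elim0, fun i => i.elim0, fun i => i.elim0⟩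

theorem HasMonoPathG.le_card [Fintype V] [Std.Irrefl lt] {ℓ : ℕ}
    (h : HasMonoPathG lt G ℓ) : ℓ ≤ Fintype.card V := by
  obtain ⟨v, hv, -⟩ := h
  have hinj : Function.Injective v :=
    .of_lt_imp_ne fun i j hij heq => irrefl _ (heq ▸ hv i j hij)
  simpa using Fintype.card_le_of_injective v hinj

theorem bddAbove_hasMonoPathG [Fintype V] [Std.Irrefl lt] :
    BddAbove {ℓ | HasMonoPathG lt G ℓ} :=
  ⟨Fintype.card V, fun _ h => h.le_card⟩

theorem HasMonoPathG.le_longestMono [Fintype V] [Std.Irrefl lt] {ℓ : ℕ}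
    (h : HasMonoPathG lt G ℓ) : ℓ ≤ longestMono lt G :=
  le_csSup bddAbove_hasMonoPathG h

theorem hasMonoPathG_longestMono [Fintype V] [Std.Irrefl lt] :
    HasMonoPathG lt G (longestMono lt G) :=
  Nat.sSup_mem ⟨0, hasMonoPathG_zero⟩ bddAbove_hasMonoPathG

theorem longestMono_le {n : ℕ} (h : ∀ ℓ, HasMonoPathG lt G ℓ → ℓ ≤ n) : longestMono lt G ≤ n :=
  csSup_le' h

theorem HasMonoPathG.le_of_potential {n ℓ : ℕ} (φ : V → ℕ) (hφ : ∀ x, φ x < n)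
    (hφ_lt : ∀ x y, lt x y → G.Adj x y → φ x < φ y) (h : HasMonoPathG lt G ℓ) : ℓ ≤ n := by
  obtain ⟨v, hv, hadj⟩ := h
  cases ℓ with
  | zero => exact n.zero_le
  | succ ℓ =>
    have hmono : StrictMono fun i => (⟨φ (v i), hφ _⟩ : Fin n) :=
      Fin.strictMono_iff_lt_succ.2 fun i =>
        hφ_lt _ _ (hv _ _ i.castSucc_lt_succ) (hadj _ _ rfl)
    simpa using Fintype.card_le_of_injective _ hmono.injective

end MonotonePaths

section Depth

variable {α : Type*} [LinearOrder α] {G : SimpleGraph α}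

theorem IsMonoPath.snoc {ℓ : ℕ} {v : Fin (ℓ + 1) → α} (hv : IsMonoPath (· < ·) G v) {y : α}
    (hy : v (Fin.last ℓ) < y) (hadj : G.Adj (v (Fin.last ℓ)) y) :
    IsMonoPath (· < ·) G (Fin.snoc v y : Fin (ℓ + 2) → α) := by
  refine ⟨fun i j hij => ?_, fun i j hij => ?_⟩
  · have := Fin.strictMono_insertNth_last (fun i j hij => hv.1 i j hij) y hy
    rw [Fin.insertNth_last'] at this
    exact this hij
  · obtain ⟨j, rfl⟩ | rfl := j.eq_castSucc_or_eq_last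
    · obtain ⟨i, rfl⟩ := i.eq_castSucc_of_ne_last (by rintro rfl; simp at hij; omega)
      simpa using hv.2 i j (by simpa using hij)
    · obtain rfl : i = (Fin.last ℓ).castSucc := Fin.ext (by simp at hij ⊢; omega)
      simpa using hadj

variable (G) in
/-- `ℓ` counts edges, not vertices, so that `monoDepth G x < longestMono (· < ·) G`. -/
def HasMonoPathEndingAt (x : α) (ℓ : ℕ) : Prop :=
  ∃ v : Fin (ℓ + 1) → α, IsMonoPath (· < ·) G v ∧ v (Fin.last ℓ) = x

variable (G) in
noncomputable def monoDepth (x : α) : ℕ :=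
  sSup {ℓ | HasMonoPathEndingAt G x ℓ}

theorem hasMonoPathEndingAt_zero (x : α) : HasMonoPathEndingAt G x 0 :=
  ⟨fun _ => x, ⟨fun i j hij => by omega, fun i j hij => by omega⟩, rfl⟩

theorem HasMonoPathEndingAt.snoc {x y : α} {ℓ : ℕ} (h : HasMonoPathEndingAt G x ℓ) (hxy : x < y)
    (hadj : G.Adj x y) : HasMonoPathEndingAt G y (ℓ + 1) := by
  obtain ⟨v, hv, rfl⟩ := h
  exact ⟨_, hv.snoc hxy hadj, Fin.snoc_last _ _⟩

variable [Fintype α]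

theorem bddAbove_hasMonoPathEndingAt (x : α) : BddAbove {ℓ | HasMonoPathEndingAt G x ℓ} :=
  ⟨Fintype.card α, fun _ ⟨v, hv, _⟩ =>
    (HasMonoPathG.le_card (G := G) (ℓ := _ + 1) ⟨v, hv⟩).trans' (Nat.le_succ _)⟩

theorem hasMonoPathEndingAt_monoDepth (x : α) : HasMonoPathEndingAt G x (monoDepth G x) :=
  Nat.sSup_mem ⟨0, hasMonoPathEndingAt_zero x⟩ (bddAbove_hasMonoPathEndingAt x)

theorem monoDepth_lt_longestMono (x : α) : monoDepth G x < longestMono (· < ·) G := by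
  obtain ⟨v, hv, -⟩ := hasMonoPathEndingAt_monoDepth (G := G) x
  exact HasMonoPathG.le_longestMono (G := G) (ℓ := _ + 1) ⟨v, hv⟩

theorem monoDepth_lt_monoDepth {x y : α} (hxy : x < y) (hadj : G.Adj x y) :
    monoDepth G x < monoDepth G y :=
  le_csSup (bddAbove_hasMonoPathEndingAt y) ((hasMonoPathEndingAt_monoDepth x).snoc hxy hadj)

end Depth

theorem Nat.div_lt_div_or_mod_lt_mod {i j : ℕ} (m : ℕ) (hij : i < j) :
    i / m < j / m ∨ (i / m = j / m ∧ i % m < j % m) := by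
  refine (Nat.div_le_div_right hij.le).lt_or_eq.imp_right fun h => ⟨h, ?_⟩
  have hi := Nat.div_add_mod i m
  have hj := Nat.div_add_mod j m
  rw [h] at hi
  omega

theorem Nat.add_one_div_mod_cases {m : ℕ} (hm : 0 < m) (k : ℕ) :
    ((k + 1) / m = k / m ∧ (k + 1) % m = k % m + 1) ∨ (k + 1) / m = k / m + 1 := by
  have hk := Nat.div_add_mod k m
  have hkm := Nat.mod_lt k hm
  by_cases h : k % m + 1 < m
  · exact .inl ((Nat.div_mod_unique hm).2 ⟨by omega, h⟩)
  · exact .inr ((Nat.div_mod_unique (c := 0) hm).2 ⟨by rw [Nat.mul_succ]; omega, hm⟩).1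

section LexProd

variable {α β : Type*} [LinearOrder α] [LinearOrder β] {G₁ : SimpleGraph α} {G₂ : SimpleGraph β}

instance : Std.Irrefl (lexLT : β × α → β × α → Prop) :=
  ⟨fun _ h => h.elim (lt_irrefl _) fun h => lt_irrefl _ h.2⟩

theorem HasMonoPathG.lexProd {m n : ℕ} (h₁ : HasMonoPathG (· < ·) G₁ m)
    (h₂ : HasMonoPathG (· < ·) G₂ n) : HasMonoPathG lexLT (lexProd G₁ G₂) (n * m) := by
  obtain ⟨a, ha, ha'⟩ := h₁
  obtain ⟨b, hb, hb'⟩ := h₂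
  rcases m.eq_zero_or_pos with rfl | hm
  · exact hasMonoPathG_zero
  refine ⟨fun k => (b k.divNat, a k.modNat), fun i j hij => ?_, fun i j hij => ?_⟩
  · rcases Nat.div_lt_div_or_mod_lt_mod m hij with h | ⟨h, h'⟩
    · exact .inl (hb _ _ h)
    · exact .inr ⟨congrArg b (Fin.ext h), ha _ _ h'⟩
  · rcases Nat.add_one_div_mod_cases hm i with ⟨h, h'⟩ | h <;> rw [hij] at h
    · rw [hij] at h'
      exact .inl ⟨congrArg b (Fin.ext h.symm), ha' _ _ h'.symm⟩
    · have hlt : b i.divNat < b j.divNat := hb _ _ (by simp [Fin.lt_def, h])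
      exact .inr ⟨hlt.ne, hb' _ _ h.symm⟩

variable [Fintype α]

variable (G₁ G₂) in
noncomputable def lexMonoDepth (p : β × α) : ℕ :=
  longestMono (· < ·) G₁ * monoDepth G₂ p.1 + monoDepth G₁ p.2

theorem lexMonoDepth_lt_mul_succ (p : β × α) :
    lexMonoDepth G₁ G₂ p < longestMono (· < ·) G₁ * (monoDepth G₂ p.1 + 1) := by
  have := monoDepth_lt_longestMono (G := G₁) p.2
  rw [lexMonoDepth, Nat.mul_succ]
  omega

variable [Fintype β]

theorem lexMonoDepth_lt (p : β × α) :
    lexMonoDepth G₁ G₂ p < longestMono (· < ·) G₁ * longestMono (· < ·) G₂ :=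
  (lexMonoDepth_lt_mul_succ p).trans_le (Nat.mul_le_mul_left _ (monoDepth_lt_longestMono _))

theorem lexMonoDepth_lt_lexMonoDepth {p q : β × α} (hpq : lexLT p q)
    (hadj : (lexProd G₁ G₂).Adj p q) : lexMonoDepth G₁ G₂ p < lexMonoDepth G₁ G₂ q := by
  rcases hadj with ⟨h, hadj⟩ | ⟨h, hadj⟩
  · have hlt : p.2 < q.2 := (hpq.resolve_left (h ▸ lt_irrefl _)).2
    rw [lexMonoDepth, lexMonoDepth, h]
    exact Nat.add_lt_add_left (monoDepth_lt_monoDepth hlt hadj) _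
  · have hlt : p.1 < q.1 := hpq.resolve_right fun h' => h h'.1
    calc _ < longestMono (· < ·) G₁ * (monoDepth G₂ p.1 + 1) := lexMonoDepth_lt_mul_succ p
      _ ≤ longestMono (· < ·) G₁ * monoDepth G₂ q.1 :=
          Nat.mul_le_mul_left _ (monoDepth_lt_monoDepth hlt hadj)
      _ ≤ _ := Nat.le_add_right _ _

theorem longestMono_lexProd_le :
    longestMono lexLT (lexProd G₁ G₂) ≤ longestMono (· < ·) G₁ * longestMono (· < ·) G₂ :=
  longestMono_le fun _ h =>
    h.le_of_potential _ lexMonoDepth_lt fun _ _ => lexMonoDepth_lt_lexMonoDepth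

end LexProd

theorem stmt_8_general {α β : Type*} [LinearOrder α] [Fintype α]
    [LinearOrder β] [Fintype β]
    (G₁ : SimpleGraph α) (G₂ : SimpleGraph β) :
    longestMono lexLT (lexProd G₁ G₂) =
      longestMono (· < ·) G₁ * longestMono (· < ·) G₂ := by
  refine le_antisymm longestMono_lexProd_le ?_
  rw [mul_comm]
  exact (hasMonoPathG_longestMono.lexProd hasMonoPathG_longestMono).le_longestMono

/-- If `L₁, L₂` are the lengths of the longest monotone paths in the ordered graphs
`G₁, G₂`, then the longest monotone path in `G₁ ⊗ G₂` has length exactly `L₁·L₂`. -/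
theorem stmt_8 {α β : Type*} [LinearOrder α] [Fintype α] [Nonempty α]
    [LinearOrder β] [Fintype β] [Nonempty β]
    (G₁ : SimpleGraph α) (G₂ : SimpleGraph β) :
    longestMono lexLT (lexProd G₁ G₂) =
      longestMono (· < ·) G₁ * longestMono (· < ·) G₂ :=
  stmt_8_general G₁ G₂
end

section
/- For all integers q > r ≥ 1 and N₁, N₂ ≥ 1, we have f_{q,r}(N₁) · f_{q,r}(N₂) ≥ f_{q,r}(N₁·N₂). -/
/-- A monotone path of length `ℓ` (number of vertices) in the `q`-edge-colored complete
graph on `[N]` given by `χ`, all of whose edge colors lie in `S`. -/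
def HasMonoPath (q N : ℕ) (χ : Fin N → Fin N → Fin q) (S : Finset (Fin q)) (ℓ : ℕ) : Prop :=
  ∃ v : Fin ℓ → Fin N, StrictMono v ∧
    ∀ i j : Fin ℓ, (i : ℕ) + 1 = (j : ℕ) → χ (v i) (v j) ∈ S

/-- The maximum length of a monotone path using at most `r` colors in the coloring `χ`. -/
noncomputable def maxMonoLen (q r N : ℕ) (χ : Fin N → Fin N → Fin q) : ℕ :=
  sSup {ℓ : ℕ | ∃ S : Finset (Fin q), S.card ≤ r ∧ HasMonoPath q N χ S ℓ}

/-- `fqr q r N` : the minimum over `q`-edge-colorings of the complete graph on `[N]` of the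
maximum length of a monotone path using at most `r` colors. -/
noncomputable def fqr (q r N : ℕ) : ℕ :=
  sInf {L : ℕ | ∃ χ : Fin N → Fin N → Fin q, L = maxMonoLen q r N χ}

lemma monoPath_le {q N : ℕ} {χ : Fin N → Fin N → Fin q} {S : Finset (Fin q)} {ℓ : ℕ}
    (h : HasMonoPath q N χ S ℓ) : ℓ ≤ N := by
  obtain ⟨v, hv, -⟩ := h
  simpa using Fintype.card_le_of_injective v hv.injective

lemma bddAbove_set (q r N : ℕ) (χ : Fin N → Fin N → Fin q) :
    BddAbove {ℓ : ℕ | ∃ S : Finset (Fin q), S.card ≤ r ∧ HasMonoPath q N χ S ℓ} :=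
  ⟨N, fun _ ⟨_, _, h⟩ => monoPath_le h⟩

lemma le_maxMonoLen {q r N ℓ : ℕ} {χ : Fin N → Fin N → Fin q} {S : Finset (Fin q)}
    (hS : S.card ≤ r) (h : HasMonoPath q N χ S ℓ) : ℓ ≤ maxMonoLen q r N χ :=
  le_csSup (bddAbove_set q r N χ) ⟨S, hS, h⟩

lemma maxMonoLen_le {q r N K : ℕ} {χ : Fin N → Fin N → Fin q}
    (h : ∀ ℓ (S : Finset (Fin q)), S.card ≤ r → HasMonoPath q N χ S ℓ → ℓ ≤ K) :
    maxMonoLen q r N χ ≤ K := by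
  have h0 : (0:ℕ) ∈ {ℓ : ℕ | ∃ S : Finset (Fin q), S.card ≤ r ∧ HasMonoPath q N χ S ℓ} :=
    ⟨∅, by simp, Fin.elim0, fun i => i.elim0, fun i => i.elim0⟩
  apply csSup_le ⟨0, h0⟩
  rintro ℓ ⟨S, hS, hp⟩; exact h ℓ S hS hp

/-- For all integers `q > r ≥ 1` and `N₁, N₂ ≥ 1`, `f_{q,r}(N₁) · f_{q,r}(N₂) ≥ f_{q,r}(N₁·N₂)`. -/
theorem stmt_10 (q r N₁ N₂ : ℕ) (hr : 1 ≤ r) (hq : r < q) (h₁ : 1 ≤ N₁) (h₂ : 1 ≤ N₂) :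
    fqr q r (N₁ * N₂) ≤ fqr q r N₁ * fqr q r N₂ := by
  classical
  have hq0 : 0 < q := lt_of_le_of_lt (Nat.zero_le r) hq
  have hne : ∀ N : ℕ, ({L : ℕ | ∃ χ : Fin N → Fin N → Fin q, L = maxMonoLen q r N χ}).Nonempty :=
    fun N => ⟨maxMonoLen q r N (fun _ _ => ⟨0, hq0⟩), fun _ _ => ⟨0, hq0⟩, rfl⟩
  obtain ⟨χ₁, hχ₁⟩ := Nat.sInf_mem (hne N₁)
  obtain ⟨χ₂, hχ₂⟩ := Nat.sInf_mem (hne N₂)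
  set m₁ := maxMonoLen q r N₁ χ₁ with hm₁
  set m₂ := maxMonoLen q r N₂ χ₂ with hm₂
  have hN₂ : 0 < N₂ := h₂
  -- the product coloring
  set χ : Fin (N₁*N₂) → Fin (N₁*N₂) → Fin q := fun x y =>
    if (x:ℕ)/N₂ = (y:ℕ)/N₂ then
      χ₂ ⟨(x:ℕ)%N₂, Nat.mod_lt _ hN₂⟩ ⟨(y:ℕ)%N₂, Nat.mod_lt _ hN₂⟩
    else
      χ₁ ⟨(x:ℕ)/N₂, (Nat.div_lt_iff_lt_mul hN₂).2 x.isLt⟩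
         ⟨(y:ℕ)/N₂, (Nat.div_lt_iff_lt_mul hN₂).2 y.isLt⟩ with hχdef
  have key : ∀ ℓ (S : Finset (Fin q)), S.card ≤ r → HasMonoPath q (N₁*N₂) χ S ℓ →
      ℓ ≤ m₁ * m₂ := by
    rintro ℓ S hS ⟨v, hv, hcol⟩
    rcases Nat.eq_zero_or_pos ℓ with rfl | hℓ
    · exact Nat.zero_le _
    -- extend v to ℕ
    set w : ℕ → ℕ := fun k => if h : k < ℓ then (v ⟨k, h⟩ : ℕ) else N₁ * N₂ + k with hwdef
    have hwk : ∀ k (h : k < ℓ), w k = (v ⟨k, h⟩ : ℕ) := fun k h => dif_pos h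
    have hwlt : ∀ k, k < ℓ → w k < N₁ * N₂ := by
      intro k h; rw [hwk k h]; exact (v ⟨k, h⟩).isLt
    have hwmono : StrictMono w := by
      intro x y hxy
      by_cases hy : y < ℓ
      · have hx : x < ℓ := hxy.trans hy
        rw [hwk x hx, hwk y hy]
        exact_mod_cast hv (show (⟨x, hx⟩ : Fin ℓ) < ⟨y, hy⟩ from hxy)
      · have hy' : w y = N₁ * N₂ + y := dif_neg hy
        by_cases hx : x < ℓ
        · have := hwlt x hx; omega
        · have hx' : w x = N₁ * N₂ + x := dif_neg hx; omega
    set b : ℕ → ℕ := fun k => w k / N₂ with hbdef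
    set c : ℕ → ℕ := fun k => w k % N₂ with hcdef
    have hbmono : Monotone b := fun i j h => Nat.div_le_div_right (hwmono.monotone h)
    have hwsplit : ∀ k, N₂ * b k + c k = w k := fun k => Nat.div_add_mod (w k) N₂
    have hclt : ∀ k, c k < N₂ := fun k => Nat.mod_lt _ hN₂
    have hblt : ∀ k, k < ℓ → b k < N₁ := fun k h =>
      (Nat.div_lt_iff_lt_mul hN₂).2 (hwlt k h)
    have hcstrict : ∀ x y, x < y → b x = b y → c x < c y := by
      intro x y hxy hb
      have e1 := hwsplit x; have e2 := hwsplit y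
      have hlt := hwmono hxy
      rw [← e1, ← e2, hb] at hlt
      omega
    have hbconst : ∀ j k, j ≤ k → (∀ m, j ≤ m → m < k → b m = b (m+1)) → b j = b k := by
      intro j k hjk
      induction k, hjk using Nat.le_induction with
      | base => intro _; rfl
      | succ k hk ih =>
        intro h
        have := ih (fun m hm hmk => h m hm (hmk.trans (Nat.lt_succ_self k)))
        rw [this]; exact h k hk (Nat.lt_succ_self k)
    set B : ∀ k, k < ℓ → Fin N₁ := fun k h => ⟨b k, hblt k h⟩ with hBdef
    set Cc : ∀ k, k < ℓ → Fin N₂ := fun k h => ⟨c k, hclt k⟩ with hCcdef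
    have hedge : ∀ k (h : k + 1 < ℓ),
        χ (v ⟨k, (Nat.lt_succ_self k).trans h⟩) (v ⟨k+1, h⟩) ∈ S := by
      intro k h
      exact hcol ⟨k, (Nat.lt_succ_self k).trans h⟩ ⟨k+1, h⟩ rfl
    have hsameS : ∀ k (h : k + 1 < ℓ), b k = b (k+1) →
        χ₂ (Cc k ((Nat.lt_succ_self k).trans h)) (Cc (k+1) h) ∈ S := by
      intro k h hb
      have hk : k < ℓ := (Nat.lt_succ_self k).trans h
      have he := hedge k h
      simp only [hχdef] at he
      rw [if_pos] at he
      · have e1 : Cc k hk = ⟨(v ⟨k, hk⟩ : ℕ) % N₂, Nat.mod_lt _ hN₂⟩ :=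
          Fin.ext (by simp [hCcdef, hcdef, hwk k hk])
        have e2 : Cc (k+1) h = ⟨(v ⟨k+1, h⟩ : ℕ) % N₂, Nat.mod_lt _ hN₂⟩ :=
          Fin.ext (by simp [hCcdef, hcdef, hwk (k+1) h])
        rw [e1, e2]; exact he
      · show ((v ⟨k, hk⟩ : ℕ))/N₂ = ((v ⟨k+1, h⟩ : ℕ))/N₂
        rw [← hwk k hk, ← hwk (k+1) h]; exact hb
    have hcrossS : ∀ k (h : k + 1 < ℓ), b k ≠ b (k+1) →
        χ₁ (B k ((Nat.lt_succ_self k).trans h)) (B (k+1) h) ∈ S := by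
      intro k h hb
      have hk : k < ℓ := (Nat.lt_succ_self k).trans h
      have he := hedge k h
      simp only [hχdef] at he
      rw [if_neg] at he
      · have e1 : B k hk = ⟨(v ⟨k, hk⟩ : ℕ) / N₂, (Nat.div_lt_iff_lt_mul hN₂).2 (v ⟨k, hk⟩).isLt⟩ :=
          Fin.ext (by simp [hBdef, hbdef, hwk k hk])
        have e2 : B (k+1) h = ⟨(v ⟨k+1, h⟩ : ℕ) / N₂, (Nat.div_lt_iff_lt_mul hN₂).2 (v ⟨k+1, h⟩).isLt⟩ :=
          Fin.ext (by simp [hBdef, hbdef, hwk (k+1) h])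
        rw [e1, e2]; exact he
      · show ¬ ((v ⟨k, hk⟩ : ℕ))/N₂ = ((v ⟨k+1, h⟩ : ℕ))/N₂
        rw [← hwk k hk, ← hwk (k+1) h]; exact hb
    -- ## the χ₁-path through block crossings
    set K := ℓ - 1 with hK
    set Cr : Finset ℕ := (Finset.range K).filter (fun j => b j ≠ b (j+1)) with hCrdef
    set t := Cr.card with ht
    set C' : Finset ℕ := insert 0 (Cr.image (· + 1)) with hC'def
    have h0notin : 0 ∉ Cr.image (· + 1) := by simp
    have hC'card : C'.card = t + 1 := by
      rw [hC'def, Finset.card_insert_of_notMem h0notin,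
        Finset.card_image_of_injective _ (add_left_injective 1)]
    have hC'lt : ∀ z ∈ C', z < ℓ := by
      intro z hz
      rw [hC'def, Finset.mem_insert] at hz
      rcases hz with rfl | hz
      · exact hℓ
      · obtain ⟨j, hj, rfl⟩ := Finset.mem_image.1 hz
        rw [hCrdef, Finset.mem_filter, Finset.mem_range] at hj
        omega
    have hC'mem : ∀ z, z ∈ C' → z ≠ 0 → ∃ j, z = j + 1 ∧ j ∈ Cr := by
      intro z hz hz0
      rw [hC'def, Finset.mem_insert] at hz
      rcases hz with rfl | hz
      · exact absurd rfl hz0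
      · obtain ⟨j, hj, rfl⟩ := Finset.mem_image.1 hz
        exact ⟨j, rfl, hj⟩
    set e := C'.orderIsoOfFin hC'card with he
    set g : Fin (t+1) → ℕ := fun i => (e i : ℕ) with hg
    have hgmono : StrictMono g := fun i j hij => Subtype.coe_lt_coe.2 (e.strictMono hij)
    have hgmem : ∀ i, g i ∈ C' := fun i => (e i).2
    have hnomid : ∀ (i i' : Fin (t+1)), (i : ℕ) + 1 = (i' : ℕ) →
        ∀ z ∈ C', ¬(g i < z ∧ z < g i') := by
      rintro i i' hii z hz ⟨h1, h2⟩
      set i'' := e.symm ⟨z, hz⟩ with hi''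
      have hgz : g i'' = z := by rw [hg]; simp [hi'']
      have hl : i < i'' := hgmono.lt_iff_lt.1 (by rw [hgz]; exact h1)
      have hr : i'' < i' := hgmono.lt_iff_lt.1 (by rw [hgz]; exact h2)
      rw [Fin.lt_def] at hl hr
      omega
    have hpath1 : HasMonoPath q N₁ χ₁ S (t+1) := by
      refine ⟨fun i => B (g i) (hC'lt _ (hgmem i)), ?_, ?_⟩
      · intro i i' hii
        have hgl : g i < g i' := hgmono hii
        have hy0 : g i' ≠ 0 := by omega
        obtain ⟨z, hz, hzCr⟩ := hC'mem _ (hgmem i') hy0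
        rw [hCrdef, Finset.mem_filter, Finset.mem_range] at hzCr
        simp only [hBdef, Fin.mk_lt_mk]
        calc b (g i) ≤ b z := hbmono (by omega)
          _ < b (g i') := by
              rw [hz]
              exact lt_of_le_of_ne (hbmono (Nat.le_succ z)) hzCr.2
      · intro i i' hii
        have hil : i < i' := by rw [Fin.lt_def]; omega
        have hgl : g i < g i' := hgmono hil
        have hy0 : g i' ≠ 0 := by omega
        obtain ⟨z, hz, hzCr⟩ := hC'mem _ (hgmem i') hy0
        rw [hCrdef, Finset.mem_filter, Finset.mem_range] at hzCr
        have hbeq : b (g i) = b z := by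
          apply hbconst (g i) z (by omega)
          intro m hm hmz
          by_contra hne
          have hmCr : m ∈ Cr := by
            rw [hCrdef, Finset.mem_filter, Finset.mem_range]
            exact ⟨by omega, hne⟩
          have hmC' : m + 1 ∈ C' := by
            rw [hC'def, Finset.mem_insert]
            exact Or.inr (Finset.mem_image.2 ⟨m, hmCr, rfl⟩)
          exact hnomid i i' hii (m+1) hmC' ⟨by omega, by omega⟩
        have hz1ℓ : z + 1 < ℓ := by have := hC'lt _ (hgmem i'); omega
        have hstep := hcrossS z hz1ℓ hzCr.2
        have e1 : B (g i) (hC'lt _ (hgmem i)) = B z ((Nat.lt_succ_self z).trans hz1ℓ) :=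
          Fin.ext hbeq
        have e2 : B (g i') (hC'lt _ (hgmem i')) = B (z+1) hz1ℓ :=
          Fin.ext (congrArg b hz)
        show χ₁ (B (g i) (hC'lt _ (hgmem i))) (B (g i') (hC'lt _ (hgmem i'))) ∈ S
        rw [e1, e2]; exact hstep
    have hm1 : t + 1 ≤ m₁ := le_maxMonoLen hS hpath1
    -- ## run starts
    set s : ℕ → ℕ := fun k => sInf {j | ∀ m, j ≤ m → m < k → b m = b (m+1)} with hs
    have hkself : ∀ k, k ∈ {j | ∀ m, j ≤ m → m < k → b m = b (m+1)} :=
      fun k m hm hmk => absurd hmk (not_lt.2 hm)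
    have hsle : ∀ k, s k ≤ k := fun k => Nat.sInf_le (hkself k)
    have hrun : ∀ k, ∀ m, s k ≤ m → m < k → b m = b (m+1) := by
      intro k
      have : s k ∈ {j | ∀ m, j ≤ m → m < k → b m = b (m+1)} := Nat.sInf_mem ⟨k, hkself k⟩
      exact this
    -- ## the χ₂-path inside a run
    have hm2k : ∀ k, k < ℓ → k - s k + 1 ≤ m₂ := by
      intro k hkℓ
      have hsk := hsle k
      refine le_maxMonoLen hS ⟨fun i => Cc (s k + i) (by have := i.isLt; omega), ?_, ?_⟩
      · intro i j hij
        have hj := j.isLt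
        have hbeq : b (s k + i) = b (s k + j) := by
          apply hbconst _ _ (by omega)
          intro m hm hmj
          exact hrun k m (by omega) (by omega)
        simp only [hCcdef, Fin.mk_lt_mk]
        exact hcstrict _ _ (by omega) hbeq
      · intro i j hij
        have hj := j.isLt
        have h' : s k + (i : ℕ) + 1 < ℓ := by omega
        have hb' : b (s k + i) = b (s k + i + 1) := hrun k _ (by omega) (by omega)
        have hstep := hsameS (s k + i) h' hb'
        convert hstep using 2
        exact Fin.ext (congrArg c (by omega))
    -- ## crossing counts
    set A : ℕ → ℕ := fun k => ((Finset.range k).filter (fun j => b j ≠ b (j+1))).card with hAdef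
    have hAlt : ∀ k, k < ℓ → A k < m₁ := by
      intro k hk
      have hsub : (Finset.range k).filter (fun j => b j ≠ b (j+1)) ⊆ Cr := by
        rw [hCrdef]
        exact Finset.filter_subset_filter _ (Finset.range_subset_range.2 (by omega))
      have := Finset.card_le_card hsub
      simp only [hAdef]
      omega
    have hRlt : ∀ k, k < ℓ → k - s k < m₂ := fun k hk => by have := hm2k k hk; omega
    have hnocross : ∀ k k', k ≤ k' → A k = A k' → ∀ m, k ≤ m → m < k' → b m = b (m+1) := by
      intro k k' hkk hAeq m hm hm'
      by_contra hne
      have hss : (Finset.range k).filter (fun j => b j ≠ b (j+1)) ⊂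
          (Finset.range k').filter (fun j => b j ≠ b (j+1)) := by
        refine ⟨Finset.filter_subset_filter _ (Finset.range_subset_range.2 hkk), fun hsub => ?_⟩
        have hmem : m ∈ (Finset.range k').filter (fun j => b j ≠ b (j+1)) := by
          rw [Finset.mem_filter, Finset.mem_range]; exact ⟨hm', hne⟩
        have := hsub hmem
        rw [Finset.mem_filter, Finset.mem_range] at this
        omega
      have := Finset.card_lt_card hss
      simp only [hAdef] at hAeq
      omega
    have hRmono : ∀ k k', k < k' → A k = A k' → k - s k < k' - s k' := by
      intro k k' hkk hAeq
      have h1 : s k' ≤ s k := by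
        apply Nat.sInf_le
        intro m hm hmk'
        by_cases hmk : m < k
        · exact hrun k m hm hmk
        · exact hnocross k k' (le_of_lt hkk) hAeq m (by omega) hmk'
      have h2 := hsle k
      omega
    -- ## conclusion via injectivity
    have hinj : Function.Injective (fun i : Fin ℓ =>
        ((⟨A i, hAlt i i.isLt⟩ : Fin m₁), (⟨(i : ℕ) - s i, hRlt i i.isLt⟩ : Fin m₂))) := by
      intro i j hEq
      simp only [Prod.mk.injEq, Fin.mk.injEq] at hEq
      obtain ⟨hA', hR'⟩ := hEq
      by_contra hne
      have hne' : (i : ℕ) ≠ (j : ℕ) := fun h => hne (Fin.ext h)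
      rcases Nat.lt_or_ge (i : ℕ) (j : ℕ) with hlt | hge
      · exact absurd hR' (Nat.ne_of_lt (hRmono i j hlt hA'))
      · have hlt : (j : ℕ) < (i : ℕ) := by omega
        exact absurd hR'.symm (Nat.ne_of_lt (hRmono j i hlt hA'.symm))
    have hcard := Fintype.card_le_of_injective _ hinj
    simpa using hcard
  calc fqr q r (N₁ * N₂) ≤ maxMonoLen q r (N₁*N₂) χ := Nat.sInf_le ⟨χ, rfl⟩
    _ ≤ m₁ * m₂ := maxMonoLen_le key
    _ = fqr q r N₁ * fqr q r N₂ := by rw [fqr, fqr, hχ₁, hχ₂]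
end

section
/- Let K be a q-edge-colored ordered complete graph on N vertices. Then there exists a q-edge-colored ordered complete graph K̃ on N^q vertices such that ℓ_i(K̃) = Π(K) for every color i ∈ {1,…,q}. -/
/-- `elli q N χ i` : the maximum length (number of vertices) of a monotone path in the
`q`-edge-colored ordered complete graph on `[N]` given by `χ`, none of whose edges has
color `i`. -/
noncomputable def elli (q N : ℕ) (χ : Fin N → Fin N → Fin q) (i : Fin q) : ℕ :=
  sSup {ℓ : ℕ | ∃ v : Fin ℓ → Fin N, StrictMono v ∧
    ∀ a b : Fin ℓ, (a : ℕ) + 1 = (b : ℕ) → χ (v a) (v b) ≠ i}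

/-!
Colour the edge `x < y` of `[N]^q`, ordered lexicographically, by `χ(x_k, y_k) + k` (mod `q`),
where `k` is the first coordinate in which `x` and `y` differ. Such an edge avoids colour `i`
exactly when the edge `x_k y_k` of `K` avoids colour `i - k`.

Lower bound: the lexicographic product of longest paths of `K` avoiding the colours `i - k`
is a path avoiding `i` with `∏ₖ ℓ_{i-k}(K) = Π(K)` vertices.

Upper bound: label each vertex `x` of a path avoiding `i` by the vector whose `k`-th entry is
the number of edges of a longest path of `K` avoiding `i - k` and ending at `x_k`. Along an edge
with first differing coordinate `k`, the entries before `k` stay the same and the `k`-th grows,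
so the labels increase lexicographically and there are at most `∏ₖ ℓ_{i-k}(K)` of them.
-/

section Paths

variable {ι ι' α β γ : Type*} [Preorder ι] [Preorder ι'] [Preorder α] [Preorder β]

/-- The steps of a path are the covering pairs of its index order, so that paths may be indexed
by any locally finite order, such as a lexicographic product of `Fin`s. -/
def IsAvoidingPath (c : α → α → γ) (i : γ) (v : ι → α) : Prop :=
  ∀ a b, a ⋖ b → v a < v b ∧ c (v a) (v b) ≠ i

variable {c : α → α → γ} {i : γ}

theorem IsAvoidingPath.strictMono [LocallyFiniteOrder ι] {v : ι → α}
    (hv : IsAvoidingPath c i v) : StrictMono v :=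
  (strictMono_iff_forall_covBy v).2 fun a b hab => (hv a b hab).1

theorem IsAvoidingPath.comp_orderIso {v : ι → α} (hv : IsAvoidingPath c i v) (e : ι' ≃o ι) :
    IsAvoidingPath c i (v ∘ e) :=
  fun a b hab => hv (e a) (e b) ((apply_covBy_apply_iff e).2 hab)

theorem isAvoidingPath_orderIso_comp_iff {c : β → β → γ} (f : α ≃o β) {v : ι → α} :
    IsAvoidingPath c i (f ∘ v) ↔ IsAvoidingPath (fun x y => c (f x) (f y)) i v := by
  simp only [IsAvoidingPath, Function.comp_apply, f.lt_iff_lt]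

theorem isAvoidingPath_fin_iff {ℓ : ℕ} {v : Fin ℓ → α} :
    IsAvoidingPath c i v ↔
      StrictMono v ∧ ∀ a b : Fin ℓ, (a : ℕ) + 1 = (b : ℕ) → c (v a) (v b) ≠ i := by
  simp only [strictMono_iff_forall_covBy, IsAvoidingPath, Fin.covBy_iff,
    Nat.covBy_iff_add_one_eq, forall_and]

theorem isAvoidingPath_fin_succ_iff {n : ℕ} {v : Fin (n + 1) → α} :
    IsAvoidingPath c i v ↔
      ∀ j : Fin n, v j.castSucc < v j.succ ∧ c (v j.castSucc) (v j.succ) ≠ i := by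
  refine ⟨fun hv j => hv _ _ (Fin.covBy_iff.2 (Nat.covBy_iff_add_one_eq.2 (by simp))),
    fun h a b hab => ?_⟩
  have hb : (b : ℕ) = a + 1 := (Nat.covBy_iff_add_one_eq.1 (Fin.covBy_iff.1 hab)).symm
  obtain ⟨j, rfl⟩ : ∃ j : Fin n, a = j.castSucc := ⟨⟨a, by omega⟩, rfl⟩
  obtain rfl : b = j.succ := Fin.ext (by simp [hb])
  exact h j

theorem IsAvoidingPath.snoc {n : ℕ} {v : Fin (n + 1) → α} (hv : IsAvoidingPath c i v) {z : α}
    (hz : v (Fin.last n) < z) (hc : c (v (Fin.last n)) z ≠ i) :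
    IsAvoidingPath c i (Fin.snoc v z : Fin (n + 2) → α) := by
  rw [isAvoidingPath_fin_succ_iff] at hv ⊢
  refine Fin.forall_fin_succ'.2 ⟨fun j => ?_, ?_⟩
  · rw [Fin.succ_castSucc, Fin.snoc_castSucc, Fin.snoc_castSucc]
    exact hv j
  · simpa using ⟨hz, hc⟩

theorem IsAvoidingPath.length_le_card [Fintype α] {ℓ : ℕ} {v : Fin ℓ → α}
    (hv : IsAvoidingPath c i v) : ℓ ≤ Fintype.card α := by
  simpa using Fintype.card_le_of_injective v hv.strictMono.injective

theorem isAvoidingPath_const_fin_one (c : α → α → γ) (i : γ) (d : α) :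
    IsAvoidingPath c i (fun _ : Fin 1 => d) :=
  fun a b hab => absurd (Subsingleton.elim a b) hab.lt.ne

end Paths

section PathLengths

variable {α γ : Type*} [Preorder α] [Fintype α] (c : α → α → γ) (i : γ)

def pathLengths : Set ℕ :=
  {ℓ | ∃ v : Fin ℓ → α, IsAvoidingPath c i v}

def endingPathLengths (d : α) : Set ℕ :=
  {ℓ | ∃ v : Fin (ℓ + 1) → α, IsAvoidingPath c i v ∧ v (Fin.last ℓ) = d}

noncomputable def endLen (d : α) : ℕ :=
  sSup (endingPathLengths c i d)

theorem bddAbove_pathLengths : BddAbove (pathLengths c i) :=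
  ⟨Fintype.card α, fun _ ⟨_, hv⟩ => hv.length_le_card⟩

theorem bddAbove_endingPathLengths (d : α) : BddAbove (endingPathLengths c i d) :=
  ⟨Fintype.card α, fun ℓ ⟨_, hv, _⟩ => by have := hv.length_le_card; omega⟩

theorem exists_isAvoidingPath_endLen (d : α) :
    ∃ v : Fin (endLen c i d + 1) → α, IsAvoidingPath c i v ∧ v (Fin.last _) = d :=
  Nat.sSup_mem (s := endingPathLengths c i d) ⟨0, _, isAvoidingPath_const_fin_one c i d, rfl⟩
    (bddAbove_endingPathLengths c i d)

variable {c i} in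
theorem endLen_lt_endLen {x y : α} (hxy : x < y) (hc : c x y ≠ i) :
    endLen c i x < endLen c i y := by
  obtain ⟨v, hv, hvx⟩ := exists_isAvoidingPath_endLen c i x
  rw [← hvx] at hxy hc
  exact Nat.lt_of_succ_le <| le_csSup (bddAbove_endingPathLengths c i y)
    ⟨Fin.snoc v y, hv.snoc hxy hc, Fin.snoc_last ..⟩

end PathLengths

section MaxPathLength

variable {q N : ℕ} (χ : Fin N → Fin N → Fin q) (i : Fin q)

theorem elli_eq_sSup_pathLengths : elli q N χ i = sSup (pathLengths χ i) := by
  simp only [elli, pathLengths, isAvoidingPath_fin_iff]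

theorem le_elli {ℓ : ℕ} {v : Fin ℓ → Fin N} (hv : IsAvoidingPath χ i v) : ℓ ≤ elli q N χ i := by
  rw [elli_eq_sSup_pathLengths]
  exact le_csSup (bddAbove_pathLengths χ i) ⟨v, hv⟩

theorem elli_le {m : ℕ} (h : ∀ ℓ (v : Fin ℓ → Fin N), IsAvoidingPath χ i v → ℓ ≤ m) :
    elli q N χ i ≤ m := by
  rw [elli_eq_sSup_pathLengths]
  exact csSup_le ⟨0, Fin.elim0, fun a => a.elim0⟩ fun ℓ ⟨v, hv⟩ => h ℓ v hv

theorem exists_isAvoidingPath_elli : ∃ v : Fin (elli q N χ i) → Fin N, IsAvoidingPath χ i v := by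
  rw [elli_eq_sSup_pathLengths]
  exact Nat.sSup_mem (s := pathLengths χ i) ⟨0, Fin.elim0, fun a => a.elim0⟩
    (bddAbove_pathLengths χ i)

theorem endLen_lt_elli (d : Fin N) : endLen χ i d < elli q N χ i := by
  obtain ⟨v, hv, -⟩ := exists_isAvoidingPath_endLen χ i d
  exact le_elli χ i hv

end MaxPathLength

theorem CovBy.apply_of_toLex {ι : Type*} {β : ι → Type*} [LinearOrder ι] [WellFoundedLT ι]
    [∀ k, PartialOrder (β k)] {x y : ∀ k, β k} (hxy : toLex x ⋖ toLex y) {k : ι}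
    (h : ∀ j < k, x j = y j) (hk : x k < y k) : x k ⋖ y k := by
  classical
  refine ⟨hk, fun b hxb hby => hxy.2 (c := toLex (Function.update x k b))
    (Pi.lt_toLex_update_self_iff.2 hxb) ⟨k, fun j hj => ?_, by simpa⟩⟩
  rw [Pi.toLex_apply, Pi.toLex_apply, Function.update_of_ne hj.ne]
  exact h j hj

section LexColoring

variable {q : ℕ} [NeZero q] {α : Type*}

open Classical in
noncomputable def firstDiff (x y : Fin q → α) : Fin q :=
  if h : ∃ k, x k ≠ y k then wellFounded_lt.min {k | x k ≠ y k} h else 0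

theorem firstDiff_eq {x y : Fin q → α} {k : Fin q} (hk : x k ≠ y k) (h : ∀ j < k, x j = y j) :
    firstDiff x y = k := by
  have hex : ∃ k, x k ≠ y k := ⟨k, hk⟩
  rw [firstDiff, dif_pos hex]
  refine le_antisymm (not_lt.1 (wellFounded_lt.not_lt_min _ hk)) (not_lt.1 fun hlt => ?_)
  exact wellFounded_lt.min_mem _ hex (h _ hlt)

noncomputable def lexColoring (χ : α → α → Fin q) (x y : Lex (Fin q → α)) : Fin q :=
  χ (ofLex x (firstDiff (ofLex x) (ofLex y))) (ofLex y (firstDiff (ofLex x) (ofLex y))) +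
    firstDiff (ofLex x) (ofLex y)

theorem lexColoring_eq (χ : α → α → Fin q) {x y : Lex (Fin q → α)} {k : Fin q}
    (hk : ofLex x k ≠ ofLex y k) (h : ∀ j < k, ofLex x j = ofLex y j) :
    lexColoring χ x y = χ (ofLex x k) (ofLex y k) + k := by
  rw [lexColoring, firstDiff_eq hk h]

end LexColoring

section ProductColoring

variable {q N : ℕ} [NeZero q]

theorem isAvoidingPath_lexProduct {α : Type*} [PartialOrder α] {β : Fin q → Type*}
    [∀ k, LinearOrder (β k)] (χ : α → α → Fin q) (i : Fin q) {u : ∀ k, β k → α}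
    (hu : ∀ k, IsAvoidingPath χ (i - k) (u k)) :
    IsAvoidingPath (lexColoring χ) i fun t : Lex (∀ k, β k) => toLex fun k => u k (ofLex t k) := by
  intro t t' htt
  obtain ⟨k, hj, hk⟩ := htt.lt
  obtain ⟨hlt, hc⟩ := hu k _ _ (htt.apply_of_toLex hj hk)
  have heq : ∀ j < k, u j (ofLex t j) = u j (ofLex t' j) := fun j hjk => congrArg (u j) (hj j hjk)
  refine ⟨⟨k, heq, hlt⟩, ?_⟩
  rw [lexColoring_eq χ (x := toLex _) (y := toLex _) hlt.ne heq]
  exact fun h => hc (eq_sub_of_add_eq h)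

theorem exists_isAvoidingPath_prod_elli (χ : Fin N → Fin N → Fin q) (i : Fin q) :
    ∃ v : Fin (∏ k, elli q N χ (i - k)) → Lex (Fin q → Fin N),
      IsAvoidingPath (lexColoring χ) i v := by
  choose u hu using fun k => exists_isAvoidingPath_elli χ (i - k)
  let e : Fin (∏ k, elli q N χ (i - k)) ≃o Lex (∀ k, Fin (elli q N χ (i - k))) :=
    Fintype.orderIsoFinOfCardEq _ (by simp)
  exact ⟨_, (isAvoidingPath_lexProduct χ i hu).comp_orderIso e⟩

theorem length_le_prod_elli (χ : Fin N → Fin N → Fin q) (i : Fin q) {ℓ : ℕ}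
    {v : Fin ℓ → Lex (Fin q → Fin N)} (hv : IsAvoidingPath (lexColoring χ) i v) :
    ℓ ≤ ∏ k, elli q N χ (i - k) := by
  let label : Fin ℓ → Lex (∀ k, Fin (elli q N χ (i - k))) := fun t =>
    toLex fun k => ⟨endLen χ (i - k) (ofLex (v t) k), endLen_lt_elli χ (i - k) _⟩
  have hlabel : StrictMono label := (strictMono_iff_forall_covBy label).2 fun s t hst => by
    obtain ⟨hlt, hc⟩ := hv s t hst
    obtain ⟨k, hj, hk⟩ := hlt
    refine ⟨k, fun j hjk => by simp [label, hj j hjk], endLen_lt_endLen hk fun h => hc ?_⟩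
    rw [lexColoring_eq χ hk.ne hj, h, sub_add_cancel]
  simpa using Fintype.card_le_of_injective label hlabel.injective

end ProductColoring

/-- Let `K` be a `q`-edge-colored ordered complete graph on `N` vertices. Then there is a
`q`-edge-colored ordered complete graph `K̃` on `N^q` vertices with
`ℓ_i(K̃) = Π(K) = ∏_j ℓ_j(K)` for every color `i`. -/
theorem stmt_13 (q N : ℕ) (hq : 1 ≤ q) (χ : Fin N → Fin N → Fin q) :
    ∃ χ' : Fin (N ^ q) → Fin (N ^ q) → Fin q,
      ∀ i : Fin q, elli q (N ^ q) χ' i = ∏ j : Fin q, elli q N χ j := by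
  have : NeZero q := ⟨by omega⟩
  let e : Fin (N ^ q) ≃o Lex (Fin q → Fin N) := Fintype.orderIsoFinOfCardEq _ (by simp)
  refine ⟨fun a b => lexColoring χ (e a) (e b), fun i => ?_⟩
  rw [← Fintype.prod_equiv (Equiv.subLeft i) (fun k => elli q N χ (i - k)) _ fun _ => rfl]
  refine le_antisymm (elli_le _ _ fun ℓ v hv => ?_) ?_
  · exact length_le_prod_elli χ i ((isAvoidingPath_orderIso_comp_iff e).2 hv)
  · obtain ⟨w, hw⟩ := exists_isAvoidingPath_prod_elli χ i
    refine le_elli _ _ (v := e.symm ∘ w) ((isAvoidingPath_orderIso_comp_iff e).1 ?_)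
    simpa [Function.comp_def] using hw
end
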